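/- (Energetic stability, Lemma 2, fixed-time form.) Let d ≥ 1, ν > 0, τ_C ≥ 0, and let τ_M : ℝ^d → ℝ be continuous with τ_M > 0 pointwise. Let u_h, u', w_h, w', f : ℝ^d → ℝ^d be smooth compactly supported vector fields and p_h : ℝ^d → ℝ smooth, and set r_M = w_h + u_h·∇u_h − ∇·(2ν∇ˢu_h) + ∇p_h − f. Assume: (H1, coarse-scale equation tested with u_h) ∫ w_h·u_h dx + c_skew(u_h,u_h,u_h) + k(u_h,u_h) + c_cons(u_h,u',u_h) + c_skew(u',u_h,u_h) + c_cons(u',u',u_h) + ∫ w'·u_h dx + τ_C ∫ (∇·u_h)² dx = ∫ f·u_h dx; (H2, fine-scale equation tested with u') ∫ w'·u' dx + ∫ τ_M⁻¹ |u'|² dx + c(u',u_h,u') = −∫ r_M·u' dx; (H3, discrete mass conservation) ∫ ∇p_h·u' dx = 0; (H4, inverse estimate) ∫ τ_M |∇·(2ν∇ˢu_h)|² dx ≤ ∫ 2ν |∇ˢu_h|² dx. Then ∫ (w_h + w')·(u_h + u') dx ≤ ∫ f·(u_h + u') dx − (1/2) k(u_h,u_h) − τ_C ∫ (∇·u_h)²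 dx − (1/2) ∫ τ_M⁻¹ |u'|² dx. -/

import Mathlib

open MeasureTheory

noncomputable section

variable {d : ℕ}

/-- Partial derivative `∂_j f` of a scalar field. -/
def pder (f : (Fin d → ℝ) → ℝ) (j : Fin d) (x : Fin d → ℝ) : ℝ :=
  fderiv ℝ f x (Pi.single j 1)

/-- Divergence `∇·v` of a vector field. -/
def vdiv (v : (Fin d → ℝ) → Fin d → ℝ) (x : Fin d → ℝ) : ℝ :=
  ∑ i, pder (fun y => v y i) i x

/-- `(a·∇v)_i = ∑_j a_j ∂_j v_i`. -/
def adv (a v : (Fin d → ℝ) → Fin d → ℝ) (x : Fin d → ℝ) (i : Fin d) : ℝ :=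
  ∑ j, a x j * pder (fun y => v y i) j x

/-- Gradient `(∇q)_i` of a scalar field. -/
def grd (q : (Fin d → ℝ) → ℝ) (x : Fin d → ℝ) (i : Fin d) : ℝ :=
  pder q i x

/-- Symmetrized gradient `(∇ˢv)_{ij} = (∂_j v_i + ∂_i v_j)/2`. -/
def symGrad (v : (Fin d → ℝ) → Fin d → ℝ) (x : Fin d → ℝ) (i j : Fin d) : ℝ :=
  (pder (fun y => v y i) j x + pder (fun y => v y j) i x) / 2

/-- `(∇·(2ν∇ˢv))_i`, the row-wise divergence of the viscous stress. -/
def divVisc (ν : ℝ) (v : (Fin d → ℝ) → Fin d → ℝ) (x : Fin d → ℝ) (i : Fin d) : ℝ :=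
  ∑ j, pder (fun y => 2 * ν * symGrad v y i j) j x

/-- Convection form `c(a,v₁,v₂) = ∫ (a·∇v₁)·v₂`. -/
def convc (a v₁ v₂ : (Fin d → ℝ) → Fin d → ℝ) : ℝ :=
  ∫ x, ∑ i, adv a v₁ x i * v₂ x i

/-- Conservative convection form `c_cons(a,v₁,v₂) = −∫ v₁·(a·∇v₂)`. -/
def convcons (a v₁ v₂ : (Fin d → ℝ) → Fin d → ℝ) : ℝ :=
  -∫ x, ∑ i, v₁ x i * adv a v₂ x i

/-- Skew convection form `c_skew = (c + c_cons)/2`. -/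
def convskew (a v₁ v₂ : (Fin d → ℝ) → Fin d → ℝ) : ℝ :=
  (convc a v₁ v₂ + convcons a v₁ v₂) / 2

/-- Viscous form `k(v₁,v₂) = ∫ 2ν ∇ˢv₁ : ∇ˢv₂`. -/
def kvisc (ν : ℝ) (v₁ v₂ : (Fin d → ℝ) → Fin d → ℝ) : ℝ :=
  ∫ x, ∑ i, ∑ j, 2 * ν * symGrad v₁ x i j * symGrad v₂ x i j

/-- Reduced Oseen form `A_red((w,r),(v,q))`. -/
def Ared (ν : ℝ) (a : (Fin d → ℝ) → Fin d → ℝ) (τ : (Fin d → ℝ) → ℝ)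
    (w : (Fin d → ℝ) → Fin d → ℝ) (r : (Fin d → ℝ) → ℝ)
    (v : (Fin d → ℝ) → Fin d → ℝ) (q : (Fin d → ℝ) → ℝ) : ℝ :=
  convc a w v + kvisc ν w v +
    ∫ x, τ x * ∑ i, (adv a w x i - divVisc ν w x i + grd r x i) * (adv a v x i + grd q x i)

/-- `|||(v,q)|||² = k(v,v) + ∫ τ_M |a·∇v + ∇q|²`. -/
def tnormSq (ν : ℝ) (a : (Fin d → ℝ) → Fin d → ℝ) (τ : (Fin d → ℝ) → ℝ)
    (v : (Fin d → ℝ) → Fin d → ℝ) (q : (Fin d → ℝ) → ℝ) : ℝ :=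
  kvisc ν v v + ∫ x, τ x * ∑ i, (adv a v x i + grd q x i) ^ 2

/-- `|||(v,q)|||`. -/
def tnorm (ν : ℝ) (a : (Fin d → ℝ) → Fin d → ℝ) (τ : (Fin d → ℝ) → ℝ)
    (v : (Fin d → ℝ) → Fin d → ℝ) (q : (Fin d → ℝ) → ℝ) : ℝ :=
  Real.sqrt (tnormSq ν a τ v q)

/-- `|||(v,q)|||₊² = |||(v,q)|||² + ∫ τ_M |∇·(2ν∇ˢv)|² + ∫ τ_M⁻¹ |v|²`. -/
def tnormPlusSq (ν : ℝ) (a : (Fin d → ℝ) → Fin d → ℝ) (τ : (Fin d → ℝ) → ℝ)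
    (v : (Fin d → ℝ) → Fin d → ℝ) (q : (Fin d → ℝ) → ℝ) : ℝ :=
  tnormSq ν a τ v q + (∫ x, τ x * ∑ i, (divVisc ν v x i) ^ 2)
    + ∫ x, (τ x)⁻¹ * ∑ i, (v x i) ^ 2

/-- `|||(v,q)|||₊`. -/
def tnormPlus (ν : ℝ) (a : (Fin d → ℝ) → Fin d → ℝ) (τ : (Fin d → ℝ) → ℝ)
    (v : (Fin d → ℝ) → Fin d → ℝ) (q : (Fin d → ℝ) → ℝ) : ℝ :=
  Real.sqrt (tnormPlusSq ν a τ v q)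


section Helpers

variable {d : ℕ}

lemma contDiff_pder {f : (Fin d → ℝ) → ℝ} (hf : ContDiff ℝ (⊤ : ℕ∞) f) (j : Fin d) :
    ContDiff ℝ (⊤ : ℕ∞) (pder f j) :=
  (hf.fderiv_right (le_refl _)).clm_apply contDiff_const

lemma cont_pder {f : (Fin d → ℝ) → ℝ} (hf : ContDiff ℝ (⊤ : ℕ∞) f) (j : Fin d) :
    Continuous (pder f j) := (contDiff_pder hf j).continuous

lemma hcs_of {f g : (Fin d → ℝ) → ℝ} (hf : HasCompactSupport f)
    (h : ∀ x, f x = 0 → g x = 0) : HasCompactSupport g :=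
  hf.mono fun x hx hfx => hx (h x hfx)

lemma hcs_pder {f : (Fin d → ℝ) → ℝ} (hf : HasCompactSupport f) (j : Fin d) :
    HasCompactSupport (pder f j) := by
  apply (hf.fderiv (𝕜 := ℝ)).mono (f' := pder f j)
  intro x hx
  simp only [Function.mem_support] at hx ⊢
  intro h0
  exact hx (by simp [pder, h0])

lemma hcs_comp {v : (Fin d → ℝ) → Fin d → ℝ} (hv : HasCompactSupport v) (i : Fin d) :
    HasCompactSupport (fun x => v x i) := by
  apply hv.mono
  intro x hx
  simp only [Function.mem_support] at hx ⊢
  intro h0; exact hx (by rw [h0]; rfl)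

lemma hcs_sum {ι : Type*} (s : Finset ι) (F : ι → (Fin d → ℝ) → ℝ)
    (h : ∀ i ∈ s, HasCompactSupport (F i)) :
    HasCompactSupport (fun x => ∑ i ∈ s, F i x) := by
  classical
  induction s using Finset.induction with
  | empty => simp only [Finset.sum_empty]; exact HasCompactSupport.zero
  | @insert a s hni ih =>
      simp only [Finset.sum_insert hni]
      exact (h a (Finset.mem_insert_self a s)).add
        (ih fun i hi => h i (Finset.mem_insert_of_mem hi))

lemma hcs_mul_left {g f : (Fin d → ℝ) → ℝ} (hf : HasCompactSupport f) :
    HasCompactSupport (fun x => g x * f x) := hf.mul_left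

lemma cont_comp {v : (Fin d → ℝ) → Fin d → ℝ} (hv : ContDiff ℝ (⊤ : ℕ∞) v) (i : Fin d) :
    Continuous (fun x => v x i) := (contDiff_pi.1 hv i).continuous

lemma cont_adv {a v : (Fin d → ℝ) → Fin d → ℝ} (ha : ContDiff ℝ (⊤ : ℕ∞) a)
    (hv : ContDiff ℝ (⊤ : ℕ∞) v) (i : Fin d) : Continuous (fun x => adv a v x i) :=
  continuous_finset_sum _ fun j _ => (cont_comp ha j).mul (cont_pder (contDiff_pi.1 hv i) j)

lemma contDiff_symGrad {v : (Fin d → ℝ) → Fin d → ℝ} (hv : ContDiff ℝ (⊤ : ℕ∞) v) (i j : Fin d) :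
    ContDiff ℝ (⊤ : ℕ∞) (fun x => symGrad v x i j) :=
  ((contDiff_pder (contDiff_pi.1 hv i) j).add (contDiff_pder (contDiff_pi.1 hv j) i)).div_const 2

lemma hcs_symGrad {v : (Fin d → ℝ) → Fin d → ℝ} (hv : HasCompactSupport v) (i j : Fin d) :
    HasCompactSupport (fun x => symGrad v x i j) := by
  refine hcs_of (f := fun x => pder (fun y => v y i) j x + pder (fun y => v y j) i x)
    ((hcs_pder (hcs_comp hv i) j).add (hcs_pder (hcs_comp hv j) i)) ?_
  intro x h0
  simp only [symGrad, h0, zero_div]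

lemma contDiff_divVisc {ν : ℝ} {v : (Fin d → ℝ) → Fin d → ℝ} (hv : ContDiff ℝ (⊤ : ℕ∞) v)
    (i : Fin d) : ContDiff ℝ (⊤ : ℕ∞) (fun x => divVisc ν v x i) :=
  ContDiff.sum fun j _ => contDiff_pder (contDiff_const.mul (contDiff_symGrad hv i j)) j

lemma hcs_divVisc {ν : ℝ} {v : (Fin d → ℝ) → Fin d → ℝ} (hv : HasCompactSupport v)
    (i : Fin d) : HasCompactSupport (fun x => divVisc ν v x i) :=
  hcs_sum _ _ fun j _ => hcs_pder
    (hcs_of (hcs_symGrad hv i j) (fun x h0 => by simp [h0])) j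

lemma integ_dot {g u : (Fin d → ℝ) → Fin d → ℝ}
    (hg : ∀ i, Continuous fun x => g x i)
    (hu : ∀ i, Continuous fun x => u x i)
    (huc : HasCompactSupport u) :
    Integrable (fun x => ∑ i, g x i * u x i) := by
  refine Continuous.integrable_of_hasCompactSupport ?_ ?_
  · exact continuous_finset_sum _ fun i _ => (hg i).mul (hu i)
  · exact hcs_sum _ _ fun i _ => hcs_mul_left (hcs_comp huc i)

lemma convcons_eq (a v w : (Fin d → ℝ) → Fin d → ℝ) : convcons a v w = -convc a w v := by
  unfold convcons convc
  congr 1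
  congr 1
  funext x
  exact Finset.sum_congr rfl fun i _ => mul_comm _ _

lemma convskew_self (a v : (Fin d → ℝ) → Fin d → ℝ) : convskew a v v = 0 := by
  have h := convcons_eq a v v
  unfold convskew
  rw [h]
  ring

end Helpers

/-- energetic stability (Lemma 2, fixed-time form). -/
theorem energetic_stability (hd : 1 ≤ d) (ν : ℝ) (hν : 0 < ν) (τC : ℝ) (hτC : 0 ≤ τC)
    (τM : (Fin d → ℝ) → ℝ) (hτM : Continuous τM) (hτM0 : ∀ x, 0 < τM x)
    (u_h u' w_h w' f : (Fin d → ℝ) → Fin d → ℝ)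
    (hu_h : ContDiff ℝ (⊤ : ℕ∞) u_h) (hu_hc : HasCompactSupport u_h)
    (hu' : ContDiff ℝ (⊤ : ℕ∞) u') (hu'c : HasCompactSupport u')
    (hw_h : ContDiff ℝ (⊤ : ℕ∞) w_h) (hw_hc : HasCompactSupport w_h)
    (hw' : ContDiff ℝ (⊤ : ℕ∞) w') (hw'c : HasCompactSupport w')
    (hf : ContDiff ℝ (⊤ : ℕ∞) f) (hfc : HasCompactSupport f)
    (p_h : (Fin d → ℝ) → ℝ) (hp_h : ContDiff ℝ (⊤ : ℕ∞) p_h)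
    (rM : (Fin d → ℝ) → Fin d → ℝ)
    (hrM : ∀ x i, rM x i =
      w_h x i + adv u_h u_h x i - divVisc ν u_h x i + grd p_h x i - f x i)
    -- (H1) coarse-scale equation tested with u_h
    (H1 : (∫ x, ∑ i, w_h x i * u_h x i) + convskew u_h u_h u_h + kvisc ν u_h u_h +
      convcons u_h u' u_h + convskew u' u_h u_h + convcons u' u' u_h +
      (∫ x, ∑ i, w' x i * u_h x i) + τC * (∫ x, (vdiv u_h x) ^ 2) =
      ∫ x, ∑ i, f x i * u_h x i)
    -- (H2) fine-scale equation tested with u'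
    (H2 : (∫ x, ∑ i, w' x i * u' x i) + (∫ x, (τM x)⁻¹ * ∑ i, (u' x i) ^ 2) +
      convc u' u_h u' = -∫ x, ∑ i, rM x i * u' x i)
    -- (H3) discrete mass conservation
    (H3 : (∫ x, ∑ i, grd p_h x i * u' x i) = 0)
    -- (H4) inverse estimate
    (H4 : (∫ x, τM x * ∑ i, (divVisc ν u_h x i) ^ 2) ≤
      ∫ x, ∑ i, ∑ j, 2 * ν * (symGrad u_h x i j) ^ 2) :
    (∫ x, ∑ i, (w_h x i + w' x i) * (u_h x i + u' x i)) ≤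
      (∫ x, ∑ i, f x i * (u_h x i + u' x i)) - (1 / 2) * kvisc ν u_h u_h -
      τC * (∫ x, (vdiv u_h x) ^ 2) - (1 / 2) * ∫ x, (τM x)⁻¹ * ∑ i, (u' x i) ^ 2 := by
  -- abbreviations
  set A := ∫ x, ∑ i, w_h x i * u_h x i with hA
  set B := ∫ x, ∑ i, w_h x i * u' x i with hB
  set C := ∫ x, ∑ i, w' x i * u_h x i with hC
  set D := ∫ x, ∑ i, w' x i * u' x i with hD
  set F1 := ∫ x, ∑ i, f x i * u_h x i with hF1
  set F2 := ∫ x, ∑ i, f x i * u' x i with hF2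
  set K := kvisc ν u_h u_h with hK
  set S := ∫ x, (τM x)⁻¹ * ∑ i, (u' x i) ^ 2 with hS
  set V := ∫ x, ∑ i, divVisc ν u_h x i * u' x i with hV
  set I5 := ∫ x, τM x * ∑ i, (divVisc ν u_h x i) ^ 2 with hI5
  -- continuity of components
  have cu_h := fun i => cont_comp hu_h i
  have cu' := fun i => cont_comp hu' i
  have cw_h := fun i => cont_comp hw_h i
  have cw' := fun i => cont_comp hw' i
  have cf := fun i => cont_comp hf i
  have cdv := fun i => (contDiff_divVisc (ν := ν) hu_h i).continuous
  have cadv := fun i => cont_adv hu_h hu_h i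
  have cgrd : ∀ i, Continuous fun x => grd p_h x i := fun i => cont_pder hp_h i
  -- integrability
  have int1 : Integrable (fun x => ∑ i, w_h x i * u_h x i) := integ_dot cw_h cu_h hu_hc
  have int2 : Integrable (fun x => ∑ i, w_h x i * u' x i) := integ_dot cw_h cu' hu'c
  have int3 : Integrable (fun x => ∑ i, w' x i * u_h x i) := integ_dot cw' cu_h hu_hc
  have int4 : Integrable (fun x => ∑ i, w' x i * u' x i) := integ_dot cw' cu' hu'c
  have intf1 : Integrable (fun x => ∑ i, f x i * u_h x i) := integ_dot cf cu_h hu_hc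
  have intf2 : Integrable (fun x => ∑ i, f x i * u' x i) := integ_dot cf cu' hu'c
  have intadv : Integrable (fun x => ∑ i, adv u_h u_h x i * u' x i) :=
    integ_dot cadv cu' hu'c
  have intdv : Integrable (fun x => ∑ i, divVisc ν u_h x i * u' x i) :=
    integ_dot cdv cu' hu'c
  have intgrd : Integrable (fun x => ∑ i, grd p_h x i * u' x i) :=
    integ_dot cgrd cu' hu'c
  have int5 : Integrable (fun x => τM x * ∑ i, (divVisc ν u_h x i) ^ 2) := by
    refine Continuous.integrable_of_hasCompactSupport
      (hτM.mul (continuous_finset_sum _ fun i _ => (cdv i).pow 2)) ?_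
    exact hcs_mul_left (hcs_sum _ _ fun i _ =>
      hcs_of (hcs_divVisc (ν := ν) hu_hc i) (fun x h0 => by simp [h0]))
  have int6 : Integrable (fun x => (τM x)⁻¹ * ∑ i, (u' x i) ^ 2) := by
    refine Continuous.integrable_of_hasCompactSupport
      ((hτM.inv₀ fun x => (hτM0 x).ne').mul
        (continuous_finset_sum _ fun i _ => (cu' i).pow 2)) ?_
    exact hcs_mul_left (hcs_sum _ _ fun i _ =>
      hcs_of (hcs_comp hu'c i) (fun x h0 => by simp [h0]))
  -- split the goal's left integral
  have egoal : (∫ x, ∑ i, (w_h x i + w' x i) * (u_h x i + u' x i)) = A + B + (C + D) := by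
    have e1 : (fun x => ∑ i, (w_h x i + w' x i) * (u_h x i + u' x i)) =
        fun x => ((∑ i, w_h x i * u_h x i) + (∑ i, w_h x i * u' x i)) +
          ((∑ i, w' x i * u_h x i) + (∑ i, w' x i * u' x i)) := by
      funext x
      rw [← Finset.sum_add_distrib, ← Finset.sum_add_distrib, ← Finset.sum_add_distrib]
      exact Finset.sum_congr rfl fun i _ => by ring
    have int12 : Integrable (fun x => (∑ i, w_h x i * u_h x i) + ∑ i, w_h x i * u' x i) :=
      int1.add int2
    have int34 : Integrable (fun x => (∑ i, w' x i * u_h x i) + ∑ i, w' x i * u' x i) :=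
      int3.add int4
    rw [hA, hB, hC, hD, e1, integral_add int12 int34,
      integral_add int1 int2, integral_add int3 int4]
  -- split the goal's right f-integral
  have ef : (∫ x, ∑ i, f x i * (u_h x i + u' x i)) = F1 + F2 := by
    have e2 : (fun x => ∑ i, f x i * (u_h x i + u' x i)) =
        fun x => (∑ i, f x i * u_h x i) + (∑ i, f x i * u' x i) := by
      funext x
      rw [← Finset.sum_add_distrib]
      exact Finset.sum_congr rfl fun i _ => by ring
    rw [hF1, hF2, e2, integral_add intf1 intf2]
  -- expand the residual integral
  have hR : (∫ x, ∑ i, rM x i * u' x i) =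
      B + convc u_h u_h u' - V + (∫ x, ∑ i, grd p_h x i * u' x i) - F2 := by
    have e3 : (fun x => ∑ i, rM x i * u' x i) =
        fun x => (∑ i, w_h x i * u' x i) + (∑ i, adv u_h u_h x i * u' x i) -
          (∑ i, divVisc ν u_h x i * u' x i) + (∑ i, grd p_h x i * u' x i) -
          (∑ i, f x i * u' x i) := by
      funext x
      rw [← Finset.sum_add_distrib, ← Finset.sum_sub_distrib, ← Finset.sum_add_distrib,
        ← Finset.sum_sub_distrib]
      exact Finset.sum_congr rfl fun i _ => by rw [hrM]; ring
    have ia : Integrable (fun x => (∑ i, w_h x i * u' x i) + ∑ i, adv u_h u_h x i * u' x i) :=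
      int2.add intadv
    have ib : Integrable (fun x =>
        ((∑ i, w_h x i * u' x i) + ∑ i, adv u_h u_h x i * u' x i) -
          ∑ i, divVisc ν u_h x i * u' x i) := ia.sub intdv
    have ic : Integrable (fun x =>
        (((∑ i, w_h x i * u' x i) + ∑ i, adv u_h u_h x i * u' x i) -
          ∑ i, divVisc ν u_h x i * u' x i) + ∑ i, grd p_h x i * u' x i) := ib.add intgrd
    rw [e3, integral_sub ic intf2, integral_add ib intgrd, integral_sub ia intdv,
      integral_add int2 intadv]
    rfl
  -- convection identities
  have hskew1 : convskew u_h u_h u_h = 0 := convskew_self u_h u_h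
  have hskew2 : convskew u' u_h u_h = 0 := convskew_self u' u_h
  have hcons1 : convcons u_h u' u_h = -convc u_h u_h u' := convcons_eq u_h u' u_h
  have hcons2 : convcons u' u' u_h = -convc u' u_h u' := convcons_eq u' u' u_h
  -- identify H4's right side with K
  have hKeq : (∫ x, ∑ i, ∑ j, 2 * ν * (symGrad u_h x i j) ^ 2) = K := by
    rw [hK]
    unfold kvisc
    refine congrArg _ (funext fun x => ?_)
    exact Finset.sum_congr rfl fun i _ => Finset.sum_congr rfl fun j _ => by ring
  -- weighted Cauchy-Schwarz
  have hCS : V ≤ (1 / 2) * I5 + (1 / 2) * S := by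
    have hpt : ∀ x, (∑ i, divVisc ν u_h x i * u' x i) ≤
        (1 / 2) * (τM x * ∑ i, (divVisc ν u_h x i) ^ 2) +
        (1 / 2) * ((τM x)⁻¹ * ∑ i, (u' x i) ^ 2) := by
      intro x
      have ht := hτM0 x
      rw [Finset.mul_sum, Finset.mul_sum, Finset.mul_sum, Finset.mul_sum,
        ← Finset.sum_add_distrib]
      refine Finset.sum_le_sum fun i _ => ?_
      set a := divVisc ν u_h x i
      set b := u' x i
      have h2 : 0 ≤ (τM x)⁻¹ * (τM x * a - b) ^ 2 := by positivity
      have h3 : (τM x)⁻¹ * (τM x * a - b) ^ 2 =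
          τM x * a ^ 2 - 2 * (a * b) + (τM x)⁻¹ * b ^ 2 := by
        field_simp
        ring
      rw [h3] at h2
      linarith
    have ihalf5 : Integrable (fun x => (1 / 2) * (τM x * ∑ i, (divVisc ν u_h x i) ^ 2)) :=
      int5.const_mul (1 / 2)
    have ihalf6 : Integrable (fun x => (1 / 2) * ((τM x)⁻¹ * ∑ i, (u' x i) ^ 2)) :=
      int6.const_mul (1 / 2)
    have iR : Integrable (fun x => (1 / 2) * (τM x * ∑ i, (divVisc ν u_h x i) ^ 2) +
        (1 / 2) * ((τM x)⁻¹ * ∑ i, (u' x i) ^ 2)) := ihalf5.add ihalf6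
    have hmono := integral_mono intdv iR hpt
    rwa [integral_add ihalf5 ihalf6, integral_const_mul, integral_const_mul] at hmono
  have hI5K : I5 ≤ K := hKeq ▸ H4
  -- combine
  rw [egoal, ef]
  rw [hskew1, hskew2, hcons1, hcons2] at H1
  rw [hR, H3] at H2
  linarith
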